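/- Let v̲ ≤ v̄ be real numbers and let W : ℝ → ℝ be differentiable on [v̲, v̄] with derivative W′ ≤ 0 on [v̲, v̄]; assume W′ and u ↦ u·W′(u) are interval-integrable on [v̲, v̄]. Define the payment P(v) = −∫_{v̲}^{v} u·W′(u) du for v ∈ [v̲, v̄]. Then for every true delay cost v⋆ ∈ [v̲, v̄] and every declared delay cost v ∈ [v̲, v̄], one has v⋆·W(v⋆) + P(v⋆) ≤ v⋆·W(v) + P(v); that is, declaring the true delay cost minimizes the generalized cost. -/

import Mathlib

/-!
Integrating by parts, `∫_{v̲}^{v} u W'(u) du = v W(v) - v̲ W(v̲) - ∫_{v̲}^{v} W`, so the generalized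
cost of declaring `v` is `(v⋆ - v) W(v) + ∫_{v̲}^{v} W` up to a constant, and the excess cost of
declaring `v` over `v⋆` is `∫_{v⋆}^{v} W - (v - v⋆) W(v)`. Since `W' ≤ 0`, `W` is nonincreasing, and
this is nonnegative on either side of `v⋆`.
-/

open Set MeasureTheory intervalIntegral

theorem AntitoneOn.sub_mul_le_intervalIntegral {W : ℝ → ℝ} {x y : ℝ}
    (hW : AntitoneOn W (uIcc x y)) : (y - x) * W y ≤ ∫ u in x..y, W u := by
  have hWint := hW.intervalIntegrable (μ := volume)
  rcases le_total x y with hxy | hyx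
  · calc (y - x) * W y = ∫ _ in x..y, W y := by simp
      _ ≤ ∫ u in x..y, W u :=
        integral_mono_on hxy intervalIntegrable_const hWint fun u hu =>
          hW (Icc_subset_uIcc hu) right_mem_uIcc hu.2
  · have : ∫ u in y..x, W u ≤ ∫ _ in y..x, W y :=
      integral_mono_on hyx hWint.symm intervalIntegrable_const fun u hu =>
        hW right_mem_uIcc (Icc_subset_uIcc' hu) hu.1
    rw [intervalIntegral.integral_const, smul_eq_mul] at this
    rw [integral_symm]
    linarith

theorem integral_id_mul_deriv_eq_sub {W W' : ℝ → ℝ} {a b : ℝ}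
    (hW : ∀ u ∈ uIcc a b, HasDerivAt W (W' u) u)
    (hint : IntervalIntegrable (fun u => u * W' u) volume a b) :
    ∫ u in a..b, u * W' u = b * W b - a * W a - ∫ u in a..b, W u := by
  have hWint : IntervalIntegrable W volume a b :=
    (HasDerivAt.continuousOn hW).intervalIntegrable
  have hprod : ∀ u ∈ uIcc a b, HasDerivAt (fun u => u * W u) (W u + u * W' u) u := fun u hu => by
    simpa using (hasDerivAt_id' u).fun_mul (hW u hu)
  have := integral_eq_sub_of_hasDerivAt hprod (hWint.add hint)
  rw [integral_add hWint hint] at this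
  linarith

theorem marginal_cost_payment_incentive_compatible_general
    (vlb vub : ℝ) (W W' : ℝ → ℝ)
    (hderiv : ∀ u ∈ Set.Icc vlb vub, HasDerivAt W (W' u) u)
    (hneg : ∀ u ∈ Set.Icc vlb vub, W' u ≤ 0)
    (hint' : IntervalIntegrable (fun u => u * W' u) MeasureTheory.volume vlb vub) :
    ∀ vstar ∈ Set.Icc vlb vub, ∀ v ∈ Set.Icc vlb vub,
      vstar * W vstar + (-(∫ u in vlb..vstar, u * W' u)) ≤
        vstar * W v + (-(∫ u in vlb..v, u * W' u)) := by
  intro vstar hvstar v hv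
  have hanti : AntitoneOn W (Icc vlb vub) :=
    antitoneOn_of_hasDerivWithinAt_nonpos (convex_Icc _ _) (HasDerivAt.continuousOn hderiv)
      (fun u hu => (hderiv u (interior_subset hu)).hasDerivWithinAt)
      (fun u hu => hneg u (interior_subset hu))
  have hsub {x : ℝ} (hx : x ∈ Icc vlb vub) : uIcc vlb x ⊆ Icc vlb vub :=
    uIcc_subset_Icc (left_mem_Icc.2 (hx.1.trans hx.2)) hx
  have hparts {x : ℝ} (hx : x ∈ Icc vlb vub) := integral_id_mul_deriv_eq_sub
    (fun u hu => hderiv u (hsub hx hu))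
    (hint'.mono_set (by rw [uIcc_of_le (hx.1.trans hx.2)]; exact hsub hx))
  have hWint {x : ℝ} (hx : x ∈ Icc vlb vub) : IntervalIntegrable W volume vlb x :=
    (hanti.mono (hsub hx)).intervalIntegrable
  have hexcess := (hanti.mono (uIcc_subset_Icc hvstar hv)).sub_mul_le_intervalIntegral
  rw [← integral_interval_sub_left (hWint hv) (hWint hvstar)] at hexcess
  rw [hparts hvstar, hparts hv]
  linarith

/-- Incentive compatibility of the marginal-cost payment (continuous core of
Theorem 1): if the expected waiting time `W` is differentiable with
nonincreasing derivative `W' ≤ 0` on `[v̲, v̄]` and the payment is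
`P v = −∫_{v̲}^{v} u·W′(u) du`, then declaring the true delay cost `v⋆`
minimizes the generalized cost `v⋆·W(v) + P(v)`. -/
theorem marginal_cost_payment_incentive_compatible
    (vlb vub : ℝ) (hv : vlb ≤ vub) (W W' : ℝ → ℝ)
    (hderiv : ∀ u ∈ Set.Icc vlb vub, HasDerivAt W (W' u) u)
    (hneg : ∀ u ∈ Set.Icc vlb vub, W' u ≤ 0)
    (hint : IntervalIntegrable W' MeasureTheory.volume vlb vub)
    (hint' : IntervalIntegrable (fun u => u * W' u) MeasureTheory.volume vlb vub) :
    ∀ vstar ∈ Set.Icc vlb vub, ∀ v ∈ Set.Icc vlb vub,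
      vstar * W vstar + (-(∫ u in vlb..vstar, u * W' u)) ≤
        vstar * W v + (-(∫ u in vlb..v, u * W' u)) :=
  marginal_cost_payment_incentive_compatible_general vlb vub W W' hderiv hneg hint'
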